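/- If $Z : I \to \mathbb{R}^{3\times 3}$ satisfies the Riccati-type evolution equation $\dot Z = -Z^2 - M(t)$ where $M(t)$ is symmetric for all $t$, and $Z(t_0)$ is symmetric, then $Z(t)$ is symmetric for all $t \in I$. -/

import Mathlib

/-! The antisymmetric part `A = Z - Zᵀ` obeys the linear equation `Ȧ = -(Z A + A Zᵀ)`: the
symmetric forcing `M` cancels and `Z² - (Zᵀ)² = Z A + A Zᵀ`. On every compact subinterval the
coefficient operator `X ↦ Z X + X Zᵀ` is uniformly Lipschitz, so uniqueness of solutions of ODEs
forces `A`, which vanishes at `t₀`, to vanish everywhere. -/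

open Matrix Set

theorem IsCompact.exists_lipschitzWith_of_continuousOn_clm {X E F : Type*} [TopologicalSpace X]
    [SeminormedAddCommGroup E] [NormedSpace ℝ E] [SeminormedAddCommGroup F] [NormedSpace ℝ F]
    {s : Set X} (hs : IsCompact s) {L : X → E →L[ℝ] F} (hL : ContinuousOn L s) :
    ∃ K, ∀ x ∈ s, LipschitzWith K (L x) := by
  obtain ⟨C, hC⟩ := hs.exists_bound_of_continuousOn hL
  exact ⟨C.toNNReal, fun x hx => (L x).lipschitz.weaken <| by
    rw [← NNReal.coe_le_coe, coe_nnnorm]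
    exact (hC x hx).trans (Real.le_coe_toNNReal C)⟩

theorem linear_ODE_solution_eq_zero {E : Type*} [NormedAddCommGroup E] [NormedSpace ℝ E]
    {I : Set ℝ} (hI : I.OrdConnected) {L : ℝ → E →L[ℝ] E} (hL : ContinuousOn L I)
    {f : ℝ → E} (hf : ∀ t ∈ I, HasDerivAt f (L t (f t)) t) {t₀ : ℝ} (ht₀ : t₀ ∈ I)
    (hf₀ : f t₀ = 0) : ∀ t ∈ I, f t = 0 := by
  have hfc : ContinuousOn f I := fun t ht => (hf t ht).continuousAt.continuousWithinAt
  have hzero : ∀ t, HasDerivWithinAt (fun _ => (0 : E)) (L t 0) univ t := fun t => by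
    simpa using hasDerivWithinAt_const t univ (0 : E)
  intro t ht
  rcases le_total t₀ t with h | h
  · have hsub : Icc t₀ t ⊆ I := hI.out ht₀ ht
    obtain ⟨K, hK⟩ := isCompact_Icc.exists_lipschitzWith_of_continuousOn_clm (hL.mono hsub)
    exact ODE_solution_unique_of_mem_Icc_right (s := fun _ => univ)
      (fun s hs => (hK s (Ico_subset_Icc_self hs)).lipschitzOnWith) (hfc.mono hsub)
      (fun s hs => (hf s (hsub (Ico_subset_Icc_self hs))).hasDerivWithinAt)
      (fun _ _ => trivial) continuousOn_const (fun s _ => (hzero s).mono (subset_univ _))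
      (fun _ _ => trivial) hf₀ (right_mem_Icc.2 h)
  · have hsub : Icc t t₀ ⊆ I := hI.out ht ht₀
    obtain ⟨K, hK⟩ := isCompact_Icc.exists_lipschitzWith_of_continuousOn_clm (hL.mono hsub)
    exact ODE_solution_unique_of_mem_Icc_left (s := fun _ => univ)
      (fun s hs => (hK s (Ioc_subset_Icc_self hs)).lipschitzOnWith) (hfc.mono hsub)
      (fun s hs => (hf s (hsub (Ioc_subset_Icc_self hs))).hasDerivWithinAt)
      (fun _ _ => trivial) continuousOn_const (fun s _ => (hzero s).mono (subset_univ _))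
      (fun _ _ => trivial) hf₀ (left_mem_Icc.2 h)

namespace Matrix

variable {𝕜 : Type*} [NontriviallyNormedField 𝕜] {m n : Type*} [Fintype n]

theorem hasDerivAt_iff {Z : 𝕜 → Matrix m n 𝕜} {Z' : Matrix m n 𝕜} {t : 𝕜} :
    HasDerivAt Z Z' t ↔ ∀ i j, HasDerivAt (fun s => Z s i j) (Z' i j) t :=
  hasDerivAt_pi.trans (forall_congr' fun _ => hasDerivAt_pi)

theorem _root_.HasDerivAt.matrix_transpose [Fintype m] {Z : 𝕜 → Matrix m n 𝕜}
    {Z' : Matrix m n 𝕜} {t : 𝕜} (h : HasDerivAt Z Z' t) : HasDerivAt (fun s => (Z s)ᵀ) Z'ᵀ t :=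
  hasDerivAt_iff.2 fun i j => hasDerivAt_iff.1 h j i

variable [DecidableEq n]

noncomputable def lyapunovCLM (B : Matrix n n ℝ) : Matrix n n ℝ →L[ℝ] Matrix n n ℝ :=
  LinearMap.toContinuousLinearMap (LinearMap.mulLeft ℝ B + LinearMap.mulRight ℝ Bᵀ)

@[simp]
theorem lyapunovCLM_apply (B X : Matrix n n ℝ) : lyapunovCLM B X = B * X + X * Bᵀ := rfl

theorem riccati_sub_transpose (Z M : Matrix n n ℝ) (hM : Mᵀ = M) :
    (-(Z * Z) - M) - (-(Z * Z) - M)ᵀ = -lyapunovCLM Z (Z - Zᵀ) := by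
  simp only [lyapunovCLM_apply, transpose_sub, transpose_neg, transpose_mul, hM, mul_sub, sub_mul]
  abel

end Matrix

theorem riccati_evolution_preserves_symmetry_general
    (I : Set ℝ) (hI : I.OrdConnected)
    (Z M : ℝ → Matrix (Fin 3) (Fin 3) ℝ)
    (hMsym : ∀ t ∈ I, (M t)ᵀ = M t)
    (hZ : ∀ t ∈ I, ∀ i j, HasDerivAt (fun s => Z s i j) ((-(Z t * Z t) - M t) i j) t)
    (t₀ : ℝ) (ht₀ : t₀ ∈ I) (hZ0 : (Z t₀)ᵀ = Z t₀) :
    ∀ t ∈ I, (Z t)ᵀ = Z t := by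
  -- Any norm would do: it only enters through the uniqueness theorem for ODEs.
  let : NormedAddCommGroup (Matrix (Fin 3) (Fin 3) ℝ) := Matrix.normedAddCommGroup
  let : NormedSpace ℝ (Matrix (Fin 3) (Fin 3) ℝ) := Matrix.normedSpace
  have hZ' : ∀ t ∈ I, HasDerivAt Z (-(Z t * Z t) - M t) t := fun t ht =>
    hasDerivAt_iff.2 (hZ t ht)
  have hZc : ContinuousOn Z I := fun t ht => (hZ' t ht).continuousAt.continuousWithinAt
  have hA : ∀ t ∈ I, HasDerivAt (fun s => Z s - (Z s)ᵀ)
      (-lyapunovCLM (Z t) (Z t - (Z t)ᵀ)) t := fun t ht => by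
    rw [← riccati_sub_transpose _ _ (hMsym t ht)]
    exact (hZ' t ht).sub (hZ' t ht).matrix_transpose
  have hL : ContinuousOn (fun t => -lyapunovCLM (Z t)) I :=
    continuousOn_clm_apply.2 fun X => by
      show ContinuousOn (fun t => -(Z t * X + X * (Z t)ᵀ)) I
      fun_prop
  intro t ht
  have hA_zero := linear_ODE_solution_eq_zero hI hL hA ht₀ (sub_eq_zero.2 hZ0.symm) t ht
  exact (sub_eq_zero.1 hA_zero).symm

/-- If `Z` solves the Riccati-type matrix ODE `Ż = -Z² - M(t)` on an interval `I` with
`M(t)` symmetric and continuous, and `Z(t₀)` is symmetric, then `Z(t)` is symmetric for all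
`t ∈ I` (an initially irrotational flow remains irrotational). -/
theorem riccati_evolution_preserves_symmetry
    (I : Set ℝ) (hI : I.OrdConnected)
    (Z M : ℝ → Matrix (Fin 3) (Fin 3) ℝ)
    (hM : ∀ i j, ContinuousOn (fun t => M t i j) I)
    (hMsym : ∀ t ∈ I, (M t)ᵀ = M t)
    (hZ : ∀ t ∈ I, ∀ i j, HasDerivAt (fun s => Z s i j) ((-(Z t * Z t) - M t) i j) t)
    (t₀ : ℝ) (ht₀ : t₀ ∈ I) (hZ0 : (Z t₀)ᵀ = Z t₀) :
    ∀ t ∈ I, (Z t)ᵀ = Z t :=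
  riccati_evolution_preserves_symmetry_general I hI Z M hMsym hZ t₀ ht₀ hZ0
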